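/- arXiv:2007.09039 — 3 statements merged into one kernel-verified Lean document; each statement's English description precedes it below -/
import Mathlib

section
/- Let U be the syndrome table afforded by e and τ, i.e., u_n = ∑_{s∈supp(e)} e_s α^{s·(τ+n)} for n ∈ ℕ². For a polynomial f ∈ 𝕃[X₁,X₂] with leading power product exponent s = LP(f), and any n ⪰ s, the linear recurring relation f[U]_n = ∑_{m∈supp(f)} f_m u_{m+n−s} can be rewritten as f[U]_n = ∑_{w∈supp(e)} e_w α^{w·(τ+n−s)} f(α^w). Consequently, if f(α^w) = 0 for all w ∈ supp(e), then f[U]_n = 0 for all n ⪰ s. -/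
/-- For the syndrome table u_n = ∑_{w ∈ supp(e)} e_w α^{w·(τ+n)} and a polynomial f
(with support F, coefficients a, leading exponent s), the linear recurring relation
f[U]_n = ∑_{m ∈ F} a_m u_{m+n−s} rewrites as ∑_{w} e_w α^{w·(τ+n−s)} f(α^w);
consequently if f vanishes at all error locations then f generates U. -/
theorem stmt8 (𝕃 : Type*) [Field 𝕃] (α₁ α₂ : 𝕃)
    (E : Finset (ℕ × ℕ)) (c : ℕ × ℕ → 𝕃) (τ : ℕ × ℕ)
    (u : ℕ × ℕ → 𝕃)
    (hu : ∀ nn : ℕ × ℕ,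
      u nn = ∑ w ∈ E, c w * (α₁ ^ (w.1 * (τ.1 + nn.1)) * α₂ ^ (w.2 * (τ.2 + nn.2))))
    (F : Finset (ℕ × ℕ)) (a : ℕ × ℕ → 𝕃) (s : ℕ × ℕ)
    (fα : ℕ × ℕ → 𝕃)
    (hfα : ∀ w : ℕ × ℕ, fα w = ∑ m ∈ F, a m * (α₁ ^ (m.1 * w.1) * α₂ ^ (m.2 * w.2))) :
    (∀ n : ℕ × ℕ, s.1 ≤ n.1 → s.2 ≤ n.2 →
      ∑ m ∈ F, a m * u (m.1 + (n.1 - s.1), m.2 + (n.2 - s.2))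
        = ∑ w ∈ E, c w *
            (α₁ ^ (w.1 * (τ.1 + (n.1 - s.1))) * α₂ ^ (w.2 * (τ.2 + (n.2 - s.2)))) * fα w) ∧
    ((∀ w ∈ E, fα w = 0) → ∀ n : ℕ × ℕ, s.1 ≤ n.1 → s.2 ≤ n.2 →
      ∑ m ∈ F, a m * u (m.1 + (n.1 - s.1), m.2 + (n.2 - s.2)) = 0) := by
  have key : ∀ n : ℕ × ℕ, s.1 ≤ n.1 → s.2 ≤ n.2 →
      ∑ m ∈ F, a m * u (m.1 + (n.1 - s.1), m.2 + (n.2 - s.2))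
        = ∑ w ∈ E, c w *
            (α₁ ^ (w.1 * (τ.1 + (n.1 - s.1))) * α₂ ^ (w.2 * (τ.2 + (n.2 - s.2)))) * fα w := by
    intro n _ _
    simp only [hu, hfα, Finset.mul_sum]
    rw [Finset.sum_comm]
    refine Finset.sum_congr rfl fun w _ => Finset.sum_congr rfl fun m _ => ?_
    have h1 : w.1 * (τ.1 + (m.1 + (n.1 - s.1))) = w.1 * (τ.1 + (n.1 - s.1)) + m.1 * w.1 := by
      ring
    have h2 : w.2 * (τ.2 + (m.2 + (n.2 - s.2))) = w.2 * (τ.2 + (n.2 - s.2)) + m.2 * w.2 := by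
      ring
    rw [h1, h2, pow_add, pow_add]
    ring
  refine ⟨key, fun h n h1 h2 => ?_⟩
  rw [key n h1 h2]
  exact Finset.sum_eq_zero fun w hw => by rw [h w hw, mul_zero]
end

section
/- With notation as above (U the syndrome table afforded by e and τ), a polynomial f ∈ 𝕃(r₁,r₂) lies in the locator ideal L(e) if and only if ∑_{s∈supp(e)} e_s α^{s·n} f(α^s) = 0 for all n ∈ Σ_τ = {n : τ ⪯ n}. Equivalently (assuming the values {α^s : s ∈ supp(e)} are distinct and the relevant Vandermonde-type system is nonsingular, which holds since αᵢ are primitive and exponents lie in ℤ_{r₁}×ℤ_{r₂}), f ∈ L(e) iff f generates U, i.e., f[U]_n = 0 for all n. -/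
lemma vand1 {𝕃 : Type*} [Field 𝕃] {ι : Type*} [DecidableEq ι] (S : Finset ι)
    (x d : ι → 𝕃)
    (hinj : ∀ i ∈ S, ∀ j ∈ S, x i = x j → i = j)
    (h : ∀ m : ℕ, ∑ i ∈ S, d i * x i ^ m = 0) :
    ∀ i ∈ S, d i = 0 := by
  induction S using Finset.induction_on generalizing d with
  | empty => simp
  | @insert j T hjT ih =>
    have key : ∀ i ∈ T, d i * (x i - x j) = 0 := by
      apply ih
      · intro i hi k hk; exact fun hxy => hinj i (by simp [hi]) k (by simp [hk]) hxy
      · intro m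
        have h1 := h (m + 1)
        have h0 := h m
        rw [Finset.sum_insert hjT] at h1 h0
        have hT1 : ∑ i ∈ T, d i * x i ^ (m+1) = -(d j * x j ^ (m+1)) := by
          linear_combination h1
        have hT0 : ∑ i ∈ T, d i * x i ^ m = -(d j * x j ^ m) := by
          linear_combination h0
        have heq : ∑ i ∈ T, d i * (x i - x j) * x i ^ m
            = (∑ i ∈ T, d i * x i ^ (m+1)) - x j * ∑ i ∈ T, d i * x i ^ m := by
          rw [Finset.mul_sum, ← Finset.sum_sub_distrib]
          apply Finset.sum_congr rfl; intro i _; ring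
        rw [heq, hT1, hT0]; ring
    have hdT : ∀ i ∈ T, d i = 0 := by
      intro i hi
      have hx : x i - x j ≠ 0 := by
        intro hxe
        have hxij : x i = x j := sub_eq_zero.mp hxe
        exact hjT (hinj i (by simp [hi]) j (by simp) hxij ▸ hi)
      exact (mul_eq_zero.mp (key i hi)).resolve_right hx
    intro i hi
    rcases Finset.mem_insert.mp hi with rfl | hiT
    · have h0 := h 0
      rw [Finset.sum_insert hjT] at h0
      simp only [pow_zero, mul_one] at h0
      have hz : ∑ i ∈ T, d i * x i ^ 0 = 0 := by
        apply Finset.sum_eq_zero; intro k hk; rw [hdT k hk]; ring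
      simp only [pow_zero, mul_one] at hz
      linear_combination h0 - hz
    · exact hdT i hiT

lemma vand2 {𝕃 : Type*} [Field 𝕃] {ι : Type*} [DecidableEq ι] (S : Finset ι)
    (x y d : ι → 𝕃)
    (hinj : ∀ i ∈ S, ∀ j ∈ S, x i = x j → y i = y j → i = j)
    (h : ∀ m1 m2 : ℕ, ∑ i ∈ S, d i * (x i ^ m1 * y i ^ m2) = 0) :
    ∀ i ∈ S, d i = 0 := by
  classical
  have houter : ∀ m2 : ℕ, ∀ v' ∈ S.image x,
      (∑ i ∈ S.filter (fun i => x i = v'), d i * y i ^ m2) = 0 := by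
    intro m2
    apply vand1 (S.image x) id (fun v' => ∑ i ∈ S.filter (fun i => x i = v'), d i * y i ^ m2)
    · intro i _ j _ hij; exact hij
    · intro m1
      have hh := h m1 m2
      rw [← Finset.sum_fiberwise_of_maps_to (g := x) (fun i hi => Finset.mem_image_of_mem x hi)
        (fun i => d i * (x i ^ m1 * y i ^ m2))] at hh
      rw [← hh]
      apply Finset.sum_congr rfl; intro v' _
      rw [Finset.sum_mul]
      apply Finset.sum_congr rfl; intro i hi
      have hx : x i = v' := by simpa using (Finset.mem_filter.mp hi).2
      rw [hx]; simp [id]; ring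
  have hfiber : ∀ v ∈ S.image x, ∀ i ∈ S.filter (fun i => x i = v), d i = 0 := by
    intro v hv
    apply vand1 (S.filter (fun i => x i = v)) y d
    · intro i hi j hj hyij
      have hxi : x i = v := by simpa using (Finset.mem_filter.mp hi).2
      have hxj : x j = v := by simpa using (Finset.mem_filter.mp hj).2
      exact hinj i (Finset.mem_filter.mp hi).1 j (Finset.mem_filter.mp hj).1
        (hxi.trans hxj.symm) hyij
    · intro m; exact houter m v hv
  intro i hi
  exact hfiber (x i) (Finset.mem_image_of_mem x hi) i (Finset.mem_filter.mpr ⟨hi, rfl⟩)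


/-- Theorem "igualdad ideales": a polynomial f lies in the locator ideal L(e) iff
∑_{w ∈ supp(e)} e_w α^{w·n} f(α^w) = 0 for all n ⪰ τ, iff f generates the syndrome
table U afforded by e and τ. -/
theorem stmt9 (𝕃 : Type*) [Field 𝕃] (r₁ r₂ : ℕ) (hr₁ : 0 < r₁) (hr₂ : 0 < r₂)
    (α₁ α₂ : 𝕃) (hα₁ : orderOf α₁ = r₁) (hα₂ : orderOf α₂ = r₂)
    (E : Finset (ℕ × ℕ)) (hE : ∀ w ∈ E, w.1 < r₁ ∧ w.2 < r₂)
    (c : ℕ × ℕ → 𝕃) (hc : ∀ w ∈ E, c w ≠ 0)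
    (hdist : ∀ w ∈ E, ∀ w' ∈ E, α₁ ^ w.1 = α₁ ^ w'.1 → α₂ ^ w.2 = α₂ ^ w'.2 → w = w')
    (τ : ℕ × ℕ) (u : ℕ × ℕ → 𝕃)
    (hu : ∀ nn : ℕ × ℕ,
      u nn = ∑ w ∈ E, c w * (α₁ ^ (w.1 * (τ.1 + nn.1)) * α₂ ^ (w.2 * (τ.2 + nn.2))))
    (F : Finset (ℕ × ℕ)) (a : ℕ × ℕ → 𝕃) (s : ℕ × ℕ)
    (fα : ℕ × ℕ → 𝕃)
    (hfα : ∀ w : ℕ × ℕ, fα w = ∑ m ∈ F, a m * (α₁ ^ (m.1 * w.1) * α₂ ^ (m.2 * w.2))) :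
    ((∀ w ∈ E, fα w = 0) ↔
      (∀ n : ℕ × ℕ, τ.1 ≤ n.1 → τ.2 ≤ n.2 →
        ∑ w ∈ E, c w * (α₁ ^ (w.1 * n.1) * α₂ ^ (w.2 * n.2)) * fα w = 0)) ∧
    ((∀ w ∈ E, fα w = 0) ↔
      (∀ n : ℕ × ℕ, s.1 ≤ n.1 → s.2 ≤ n.2 →
        ∑ m ∈ F, a m * u (m.1 + (n.1 - s.1), m.2 + (n.2 - s.2)) = 0)) := by
  classical
  have hα₁0 : α₁ ≠ 0 := by
    intro h0
    have h1 : α₁ ^ r₁ = 1 := hα₁ ▸ pow_orderOf_eq_one α₁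
    rw [h0, zero_pow hr₁.ne'] at h1
    exact zero_ne_one h1
  have hα₂0 : α₂ ≠ 0 := by
    intro h0
    have h1 : α₂ ^ r₂ = 1 := hα₂ ▸ pow_orderOf_eq_one α₂
    rw [h0, zero_pow hr₂.ne'] at h1
    exact zero_ne_one h1
  -- key: if d w * stuff sums vanish for shifted monomials, d ≡ 0
  have key : ∀ (t : ℕ × ℕ) (d : ℕ × ℕ → 𝕃),
      (∀ k1 k2 : ℕ,
        ∑ w ∈ E, d w * (α₁ ^ (w.1 * (t.1 + k1)) * α₂ ^ (w.2 * (t.2 + k2))) = 0) →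
      ∀ w ∈ E, d w = 0 := by
    intro t d hsum w hw
    have h2 := vand2 E (fun w => α₁ ^ w.1) (fun w => α₂ ^ w.2)
      (fun w => d w * (α₁ ^ (w.1 * t.1) * α₂ ^ (w.2 * t.2))) hdist ?_ w hw
    · have hne : α₁ ^ (w.1 * t.1) * α₂ ^ (w.2 * t.2) ≠ 0 :=
        mul_ne_zero (pow_ne_zero _ hα₁0) (pow_ne_zero _ hα₂0)
      exact (mul_eq_zero.mp h2).resolve_right hne
    · intro m1 m2
      have := hsum m1 m2
      rw [← this]
      apply Finset.sum_congr rfl; intro v _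
      rw [mul_add, mul_add, pow_add, pow_add, ← pow_mul, ← pow_mul]
      ring
  -- swap lemma for second iff
  have hswap : ∀ k1 k2 : ℕ,
      ∑ m ∈ F, a m * u (m.1 + k1, m.2 + k2)
        = ∑ w ∈ E, (c w * fα w) * (α₁ ^ (w.1 * (τ.1 + k1)) * α₂ ^ (w.2 * (τ.2 + k2))) := by
    intro k1 k2
    simp only [hu, hfα, Finset.mul_sum, Finset.sum_mul]
    rw [Finset.sum_comm]
    apply Finset.sum_congr rfl; intro w _
    apply Finset.sum_congr rfl; intro m _
    have e1 : w.1 * (τ.1 + (m.1 + k1)) = m.1 * w.1 + w.1 * (τ.1 + k1) := by ring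
    have e2 : w.2 * (τ.2 + (m.2 + k2)) = m.2 * w.2 + w.2 * (τ.2 + k2) := by ring
    rw [e1, e2, pow_add, pow_add]
    ring
  constructor
  · constructor
    · intro hz n _ _
      apply Finset.sum_eq_zero; intro w hw; rw [hz w hw]; ring
    · intro h w hw
      have hk := key τ (fun w => c w * fα w) ?_ w hw
      · exact (mul_eq_zero.mp hk).resolve_left (hc w hw)
      · intro k1 k2
        have hh := h (τ.1 + k1, τ.2 + k2) (Nat.le_add_right _ _) (Nat.le_add_right _ _)
        rw [← hh]
        apply Finset.sum_congr rfl; intro v _; ring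
  · constructor
    · intro hz n h1 h2
      have hn1 : n.1 = s.1 + (n.1 - s.1) := (Nat.add_sub_cancel' h1).symm
      rw [hswap (n.1 - s.1) (n.2 - s.2)]
      apply Finset.sum_eq_zero; intro w hw; rw [hz w hw]; ring
    · intro h w hw
      have hk := key τ (fun w => c w * fα w) ?_ w hw
      · exact (mul_eq_zero.mp hk).resolve_left (hc w hw)
      · intro k1 k2
        have hh := h (s.1 + k1, s.2 + k2) (Nat.le_add_right _ _) (Nat.le_add_right _ _)
        simp only [Nat.add_sub_cancel_left] at hh
        rw [← hswap k1 k2]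
        exact hh
end

section
/- For t with 1 ≤ t ≤ 4: if Δ ⊆ ℕ×ℕ is a down-set with |Δ| ≤ t−1 (so that adding at least one point keeps size ≤ t), s ∈ ℕ×ℕ is a minimal element of the complement of Δ, and l = (l₁,l₂) satisfies l ⪰ s and l − s ∉ Δ, and the down-set generated by Δ ∪ {l−s} (i.e., Δ ∪ Δ_{l−s} where Δ_{l−s} = {n : n ⪯ l−s}) has cardinality at most t, then (l₁+1)(l₂+1) ≤ 2t+1. -/
/-- A set Δ ⊆ ℕ × ℕ is a down-set for the componentwise order. -/
def IsDownset (Δ : Set (ℕ × ℕ)) : Prop :=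
  ∀ m ∈ Δ, ∀ n : ℕ × ℕ, n.1 ≤ m.1 → n.2 ≤ m.2 → n ∈ Δ

/-!
Since `s` is minimal outside `Δ`, the box `Δ_s` minus its corner lies in `Δ`. With `d = l - s`
this gives `|Δ_s| ≤ |Δ| + 1 ≤ t`, `|Δ_d| ≤ t` and `|Δ_s ∪ Δ_d| ≤ t + 1`, because `Δ_d` and
`(Δ_s ∪ Δ_d) \ {s}` lie in `Δ ∪ Δ_d`. For `t ≤ 4` the boxes `Δ_s`, `Δ_d` have sides at most `4`,
and a finite check shows that these three constraints force `|Δ_{s+d}| ≤ 2t + 1`. The bound on `t`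
matters: `s = (3,0)`, `d = (0,3)`, `t = 6` meet the constraints while `|Δ_{(3,3)}| = 16 > 13`.
-/

open Set

lemma Set.ncard_Iic_prod (m : ℕ × ℕ) : (Iic m).ncard = (m.1 + 1) * (m.2 + 1) := by
  rw [← Finset.coe_Iic, ncard_coe_finset, Finset.card_Iic_prod, Nat.card_Iic, Nat.card_Iic]

set_option synthInstance.maxSize 2000 in
lemma add_one_mul_add_one_le_of_small_boxes :
    ∀ t < 5, ∀ a < 4, ∀ b < 4, ∀ c < 4, ∀ e < 4,
      (a + 1) * (b + 1) ≤ t → (c + 1) * (e + 1) ≤ t →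
      (a + 1) * (b + 1) + (c + 1) * (e + 1) ≤ t + 1 + (min a c + 1) * (min b e + 1) →
      (a + c + 1) * (b + e + 1) ≤ 2 * t + 1 := by
  decide

lemma ncard_Iic_add_le {t : ℕ} (ht : t ≤ 4) {s d : ℕ × ℕ} (hs : (Iic s).ncard ≤ t)
    (hd : (Iic d).ncard ≤ t) (hsd : (Iic s ∪ Iic d).ncard ≤ t + 1) :
    (Iic (s + d)).ncard ≤ 2 * t + 1 := by
  have hincl := ncard_union_add_ncard_inter (Iic s) (Iic d)
  rw [Iic_inter_Iic] at hincl
  simp only [ncard_Iic_prod, Prod.fst_add, Prod.snd_add, Prod.fst_inf, Prod.snd_inf] at *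
  have hs₁ : s.1 + 1 ≤ (s.1 + 1) * (s.2 + 1) := Nat.le_mul_of_pos_right _ (by omega)
  have hs₂ : s.2 + 1 ≤ (s.1 + 1) * (s.2 + 1) := Nat.le_mul_of_pos_left _ (by omega)
  have hd₁ : d.1 + 1 ≤ (d.1 + 1) * (d.2 + 1) := Nat.le_mul_of_pos_right _ (by omega)
  have hd₂ : d.2 + 1 ≤ (d.1 + 1) * (d.2 + 1) := Nat.le_mul_of_pos_left _ (by omega)
  exact add_one_mul_add_one_le_of_small_boxes t (by omega) s.1 (by omega) s.2 (by omega)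
    d.1 (by omega) d.2 (by omega) hs hd (by omega)

lemma Iic_sdiff_singleton_subset_of_minimal {Δ : Set (ℕ × ℕ)} {s : ℕ × ℕ}
    (hsmin : ∀ s' : ℕ × ℕ, s' ∉ Δ → s'.1 ≤ s.1 → s'.2 ≤ s.2 → s' = s) :
    Iic s \ {s} ⊆ Δ := by
  rintro x ⟨hxs, hne⟩
  by_contra hx
  exact hne (hsmin x hx hxs.1 hxs.2)

theorem stmt12_general (t : ℕ) (h1 : 1 ≤ t) (h2 : t ≤ 4)
    (Δ : Set (ℕ × ℕ)) (hfin : Δ.Finite) (hcard : Δ.ncard ≤ t - 1)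
    (s : ℕ × ℕ)
    (hsmin : ∀ s' : ℕ × ℕ, s' ∉ Δ → s'.1 ≤ s.1 → s'.2 ≤ s.2 → s' = s)
    (l : ℕ × ℕ) (hls : s.1 ≤ l.1 ∧ s.2 ≤ l.2)
    (hgrow : (Δ ∪ {n : ℕ × ℕ | n.1 ≤ l.1 - s.1 ∧ n.2 ≤ l.2 - s.2}).ncard ≤ t) :
    (l.1 + 1) * (l.2 + 1) ≤ 2 * t + 1 := by
  set d : ℕ × ℕ := (l.1 - s.1, l.2 - s.2)
  have hl : l = s + d := Prod.ext (by simp [d]; omega) (by simp [d]; omega)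
  change (Δ ∪ Iic d).ncard ≤ t at hgrow
  have hfin' : (Δ ∪ Iic d).Finite := hfin.union (finite_Iic d)
  have hsub := Iic_sdiff_singleton_subset_of_minimal hsmin
  have hs : (Iic s).ncard ≤ t := by
    have hcorner := ncard_sdiff_singleton_add_one (mem_Iic.2 le_rfl) (finite_Iic s)
    have hle := ncard_le_ncard hsub hfin
    omega
  have hd : (Iic d).ncard ≤ t := (ncard_le_ncard subset_union_right hfin').trans hgrow
  have hsd : (Iic s ∪ Iic d).ncard ≤ t + 1 := by
    have hcorner := ncard_sdiff_singleton_add_one (a := s) (Or.inl (mem_Iic.2 le_rfl))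
      ((finite_Iic s).union (finite_Iic d))
    have hsub' : (Iic s ∪ Iic d) \ {s} ⊆ Δ ∪ Iic d := by
      rw [union_sdiff_distrib]
      exact union_subset_union hsub sdiff_subset
    have hle := (ncard_le_ncard hsub' hfin').trans hgrow
    omega
  rw [← ncard_Iic_prod, hl]
  exact ncard_Iic_add_le h2 hs hd hsd

/-- Lemma "cota para l₁+1 por l₂+1": for 1 ≤ t ≤ 4, if Δ is a finite down-set with
|Δ| ≤ t − 1, s a minimal element of its complement, l ⪰ s with l − s ∉ Δ, and the
down-set Δ ∪ Δ_{l−s} has at most t elements, then (l₁+1)(l₂+1) ≤ 2t+1. -/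
theorem stmt12 (t : ℕ) (h1 : 1 ≤ t) (h2 : t ≤ 4)
    (Δ : Set (ℕ × ℕ)) (hΔ : IsDownset Δ) (hfin : Δ.Finite) (hcard : Δ.ncard ≤ t - 1)
    (s : ℕ × ℕ) (hs : s ∉ Δ)
    (hsmin : ∀ s' : ℕ × ℕ, s' ∉ Δ → s'.1 ≤ s.1 → s'.2 ≤ s.2 → s' = s)
    (l : ℕ × ℕ) (hls : s.1 ≤ l.1 ∧ s.2 ≤ l.2)
    (hnot : (l.1 - s.1, l.2 - s.2) ∉ Δ)
    (hgrow : (Δ ∪ {n : ℕ × ℕ | n.1 ≤ l.1 - s.1 ∧ n.2 ≤ l.2 - s.2}).ncard ≤ t) :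
    (l.1 + 1) * (l.2 + 1) ≤ 2 * t + 1 :=
  stmt12_general t h1 h2 Δ hfin hcard s hsmin l hls hgrow
end
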